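/- Two-period swap inequality: Let α > 0 and w ∈ [0,1], and define f(R,a) := R + (1−R)·a^α and g(x) := (1−w)·x + w. Then for all R, a, b ∈ [0,1]: f(g(f(R,a)), b) ≥ f(f(R,b), a). That is, advertising at level a and then receiving the full-fill WoM update before advertising at level b yields a post-advertisement reputation at least as large as advertising at level b and then at level a with no WoM update in between. -/

import Mathlib

/-!
Advertising commutes: `1 - f(R, a) = (1 - R)(1 - a^α)`, so two advertisements multiply the
remaining gap `1 - R` by the same two factors in either order. Hence `f(f(R,b),a) = f(f(R,a),b)`,
and the full-fill update, which only moves reputation towards `1`, raises the argument of the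
monotone map `f(·, b)`.
-/

noncomputable section

/-- Post-advertisement reputation map. -/
def frep (α R a : ℝ) : ℝ := R + (1 - R) * a ^ α

/-- Full-fill WoM update with weight `w`. -/
def wom (w x : ℝ) : ℝ := (1 - w) * x + w

theorem frep_comm (α R a b : ℝ) : frep α (frep α R a) b = frep α (frep α R b) a := by
  unfold frep
  ring

theorem frep_le_one {α R a : ℝ} (hR : R ≤ 1) (ha : a ^ α ≤ 1) : frep α R a ≤ 1 := by
  unfold frep
  nlinarith [mul_nonneg (sub_nonneg.2 hR) (sub_nonneg.2 ha)]

theorem frep_monotone {α b : ℝ} (hb : b ^ α ≤ 1) : Monotone (frep α · b) := by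
  intro x y hxy
  simp only [frep]
  nlinarith [mul_le_mul_of_nonneg_right hxy (sub_nonneg.2 hb)]

theorem le_wom {w x : ℝ} (hw : 0 ≤ w) (hx : x ≤ 1) : x ≤ wom w x := by
  unfold wom
  nlinarith [mul_nonneg hw (sub_nonneg.2 hx)]

theorem two_period_swap_inequality_general (α w R a b : ℝ)
    (hα : 0 < α) (hw0 : 0 ≤ w)
    (hR1 : R ≤ 1) (ha0 : 0 ≤ a) (ha1 : a ≤ 1)
    (hb0 : 0 ≤ b) (hb1 : b ≤ 1) :
    frep α (frep α R b) a ≤ frep α (wom w (frep α R a)) b := by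
  have hA : a ^ α ≤ 1 := Real.rpow_le_one ha0 ha1 hα.le
  have hB : b ^ α ≤ 1 := Real.rpow_le_one hb0 hb1 hα.le
  calc frep α (frep α R b) a = frep α (frep α R a) b := frep_comm α R b a
    _ ≤ frep α (wom w (frep α R a)) b := frep_monotone hB (le_wom hw0 (frep_le_one hR1 hA))

/-- Two-period swap inequality: advertising at level `a`, receiving the
full-fill WoM update, then advertising at level `b` yields a post-advertisement
reputation at least as large as advertising at `b` then `a` with no WoM update
in between. -/
theorem two_period_swap_inequality (α w R a b : ℝ)
    (hα : 0 < α) (hw0 : 0 ≤ w) (hw1 : w ≤ 1)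
    (hR0 : 0 ≤ R) (hR1 : R ≤ 1) (ha0 : 0 ≤ a) (ha1 : a ≤ 1)
    (hb0 : 0 ≤ b) (hb1 : b ≤ 1) :
    frep α (frep α R b) a ≤ frep α (wom w (frep α R a)) b :=
  two_period_swap_inequality_general α w R a b hα hw0 hR1 ha0 ha1 hb0 hb1

end
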